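/- (Data processing inequality) If Z → X → Y forms a Markov chain of finite random variables, then I(X;Z) ≥ I(Y;Z). -/
import Mathlib


open Finset

noncomputable def margFst {α β : Type*} [Fintype β] (p : α × β → ℝ) (a : α) : ℝ :=
  ∑ b, p (a, b)

noncomputable def margSnd {α β : Type*} [Fintype α] (p : α × β → ℝ) (b : β) : ℝ :=
  ∑ a, p (a, b)

/-- Shannon entropy of a pmf. -/
noncomputable def entropy {α : Type*} [Fintype α] (p : α → ℝ) : ℝ :=
  -∑ a, p a * Real.log (p a)

/-- Mutual information of a joint pmf. -/
noncomputable def mutInfo {α β : Type*} [Fintype α] [Fintype β] (p : α × β → ℝ) : ℝ :=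
  ∑ a, ∑ b, p (a, b) * Real.log (p (a, b) / (margFst p a * margSnd p b))

/-- Variation of information VI(X;Y) = H(X) + H(Y) - 2 I(X;Y). -/
noncomputable def VI {α β : Type*} [Fintype α] [Fintype β] (p : α × β → ℝ) : ℝ :=
  entropy (margFst p) + entropy (margSnd p) - 2 * mutInfo p

/-- The joint pmf of (Y, X) obtained by swapping the coordinates. -/
noncomputable def swapJoint {α β : Type*} (p : α × β → ℝ) : β × α → ℝ :=
  fun x => p (x.2, x.1)


/-- Joint pmf of (X, Z_f) from a joint pmf of (X, Z_f, Z_s). -/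
noncomputable def jointXF {X F S : Type*} [Fintype S] (p : X × F × S → ℝ) : X × F → ℝ :=
  fun a => ∑ s, p (a.1, a.2, s)

/-- Joint pmf of (X, Z_s). -/
noncomputable def jointXS {X F S : Type*} [Fintype F] (p : X × F × S → ℝ) : X × S → ℝ :=
  fun a => ∑ f, p (a.1, f, a.2)

/-- Joint pmf of (Z_f, Z_s). -/
noncomputable def jointFS {X F S : Type*} [Fintype X] (p : X × F × S → ℝ) : F × S → ℝ :=
  fun a => ∑ x, p (x, a.1, a.2)

lemma log_ineq_aux {a b : ℝ} (ha : 0 < a) (hb : 0 < b) :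
    a - b ≤ a * (Real.log a - Real.log b) := by
  have h := Real.log_le_sub_one_of_pos (div_pos hb ha)
  rw [Real.log_div hb.ne' ha.ne'] at h
  have h2 : a * (Real.log b - Real.log a) ≤ a * (b / a - 1) :=
    mul_le_mul_of_nonneg_left h ha.le
  have h3 : a * (b / a - 1) = b - a := by field_simp
  nlinarith

/-- Data processing inequality. `p` is a joint pmf of `(Z, X, Y)`. The Markov
condition `Z → X → Y` states that `Z` and `Y` are conditionally independent
given `X`: `p(z,x,y) * p(x) = p(z,x) * p(x,y)`. -/
theorem data_processing_inequality {Z X Y : Type*} [Fintype Z] [Fintype X] [Fintype Y]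
    (p : Z × X × Y → ℝ) (hp : ∀ t, 0 ≤ p t) (hsum : ∑ t, p t = 1)
    (hMarkov : ∀ z x y,
      p (z, x, y) * margFst (jointFS p) x = jointXF p (z, x) * jointFS p (x, y)) :
    mutInfo (jointXS p) ≤ mutInfo (jointXF p) := by
  classical
  set pZX := jointXF p with hpZXdef
  set pZY := jointXS p with hpZYdef
  set pXY := jointFS p with hpXYdef
  have hZXnn : ∀ z x, 0 ≤ pZX (z, x) := fun z x => Finset.sum_nonneg fun _ _ => hp _
  have hZYnn : ∀ z y, 0 ≤ pZY (z, y) := fun z y => Finset.sum_nonneg fun _ _ => hp _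
  have hXYnn : ∀ x y, 0 ≤ pXY (x, y) := fun x y => Finset.sum_nonneg fun _ _ => hp _
  have hpYnn : ∀ y, 0 ≤ margSnd pZY y := fun y => Finset.sum_nonneg fun z _ => hZYnn z y
  set q : Z → X → Y → ℝ :=
    fun z x y => pZY (z, y) * pXY (x, y) / margSnd pZY y with hq
  -- triple-sum expressions for the two mutual informations
  have hMIZX : mutInfo pZX = ∑ z, ∑ x, ∑ y, p (z, x, y) *
      Real.log (pZX (z, x) / (margFst pZX z * margSnd pZX x)) := by
    unfold mutInfo
    exact Finset.sum_congr rfl fun z _ => Finset.sum_congr rfl fun x _ =>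
      Finset.sum_mul _ _ _
  have hMIZY : mutInfo pZY = ∑ z, ∑ x, ∑ y, p (z, x, y) *
      Real.log (pZY (z, y) / (margFst pZY z * margSnd pZY y)) := by
    unfold mutInfo
    refine Finset.sum_congr rfl fun z _ => ?_
    calc ∑ y, pZY (z, y) * Real.log (pZY (z, y) / (margFst pZY z * margSnd pZY y))
        = ∑ y, ∑ x, p (z, x, y) *
            Real.log (pZY (z, y) / (margFst pZY z * margSnd pZY y)) :=
          Finset.sum_congr rfl fun y _ => Finset.sum_mul _ _ _
      _ = ∑ x, ∑ y, p (z, x, y) *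
            Real.log (pZY (z, y) / (margFst pZY z * margSnd pZY y)) :=
          Finset.sum_comm
  -- the key termwise inequality
  have hterm : ∀ z x y, p (z, x, y) - q z x y ≤
      p (z, x, y) * Real.log (pZX (z, x) / (margFst pZX z * margSnd pZX x)) -
      p (z, x, y) * Real.log (pZY (z, y) / (margFst pZY z * margSnd pZY y)) := by
    intro z x y
    rcases (hp (z, x, y)).eq_or_lt with h0 | hpos
    · have hqnn : 0 ≤ q z x y :=
        div_nonneg (mul_nonneg (hZYnn z y) (hXYnn x y)) (hpYnn y)
      rw [← h0]
      simpa using hqnn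
    · have hb : 0 < pXY (x, y) :=
        lt_of_lt_of_le hpos (Finset.single_le_sum (fun z' _ => hp (z', x, y)) (mem_univ z))
      have hc : 0 < pZY (z, y) :=
        lt_of_lt_of_le hpos (Finset.single_le_sum (fun x' _ => hp (z, x', y)) (mem_univ x))
      have ha : 0 < pZX (z, x) :=
        lt_of_lt_of_le hpos (Finset.single_le_sum (fun y' _ => hp (z, x, y')) (mem_univ y))
      have hpz : 0 < margFst pZX z :=
        lt_of_lt_of_le ha (Finset.single_le_sum (fun x' _ => hZXnn z x') (mem_univ x))
      have hpx : 0 < margSnd pZX x :=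
        lt_of_lt_of_le ha (Finset.single_le_sum (fun z' _ => hZXnn z' x) (mem_univ z))
      have hpz' : 0 < margFst pZY z :=
        lt_of_lt_of_le hc (Finset.single_le_sum (fun y' _ => hZYnn z y') (mem_univ y))
      have hpy : 0 < margSnd pZY y :=
        lt_of_lt_of_le hc (Finset.single_le_sum (fun z' _ => hZYnn z' y) (mem_univ z))
      have hxx : margSnd pZX x = margFst pXY x := by
        show (∑ z', ∑ y', p (z', x, y')) = ∑ y', ∑ z', p (z', x, y')
        exact Finset.sum_comm
      have hzz : margFst pZY z = margFst pZX z := by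
        show (∑ y', ∑ x', p (z, x', y')) = ∑ x', ∑ y', p (z, x', y')
        exact Finset.sum_comm
      have hM := hMarkov z x y
      have haeq : pZX (z, x) = p (z, x, y) * margSnd pZX x / pXY (x, y) := by
        rw [eq_div_iff hb.ne', hxx]
        linarith [hM]
      have hqpos : 0 < q z x y := by
        rw [hq]
        exact div_pos (mul_pos hc hb) hpy
      have l1 : Real.log (pZX (z, x)) =
          Real.log (p (z, x, y)) + Real.log (margSnd pZX x) - Real.log (pXY (x, y)) := by
        rw [haeq, Real.log_div (by positivity) hb.ne', Real.log_mul hpos.ne' hpx.ne']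
      have l2 : Real.log (q z x y) =
          Real.log (pZY (z, y)) + Real.log (pXY (x, y)) - Real.log (margSnd pZY y) := by
        rw [hq]
        rw [Real.log_div (by positivity) hpy.ne', Real.log_mul hc.ne' hb.ne']
      have hlog : Real.log (pZX (z, x) / (margFst pZX z * margSnd pZX x)) -
          Real.log (pZY (z, y) / (margFst pZY z * margSnd pZY y)) =
          Real.log (p (z, x, y)) - Real.log (q z x y) := by
        rw [hzz, Real.log_div ha.ne' (by positivity), Real.log_mul hpz.ne' hpx.ne',
          Real.log_div hc.ne' (by positivity), Real.log_mul hpz.ne' hpy.ne']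
        linarith [l1, l2]
      calc p (z, x, y) - q z x y
          ≤ p (z, x, y) * (Real.log (p (z, x, y)) - Real.log (q z x y)) :=
            log_ineq_aux hpos hqpos
        _ = _ := by rw [← hlog]; ring
  -- sum of q is at most 1
  have hper : ∀ y, ∑ z, ∑ x, q z x y ≤ margSnd pZY y := by
    intro y
    by_cases h0 : margSnd pZY y = 0
    · simp [hq, h0, hpYnn y]
    · have hbx : (∑ x, pXY (x, y)) = margSnd pZY y := by
        show (∑ x, ∑ z, p (z, x, y)) = ∑ z, ∑ x, p (z, x, y)
        exact Finset.sum_comm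
      have hz : ∀ z, ∑ x, q z x y = pZY (z, y) := by
        intro z
        simp only [hq]
        rw [← Finset.sum_div, ← Finset.mul_sum, hbx, mul_div_assoc, div_self h0, mul_one]
      rw [Finset.sum_congr rfl fun z _ => hz z]
      exact le_of_eq rfl
  have hsum' : (∑ z, ∑ x, ∑ y, p (z, x, y)) = 1 := by
    rw [← hsum, Fintype.sum_prod_type]
    exact Finset.sum_congr rfl fun z _ => (Fintype.sum_prod_type (f := fun w => p (z, w))).symm
  have hpY1 : (∑ y, margSnd pZY y) = 1 := by
    calc (∑ y, ∑ z, ∑ x, p (z, x, y))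
        = ∑ z, ∑ y, ∑ x, p (z, x, y) := Finset.sum_comm
      _ = ∑ z, ∑ x, ∑ y, p (z, x, y) :=
          Finset.sum_congr rfl fun z _ => Finset.sum_comm
      _ = 1 := hsum'
  have hqsum : (∑ z, ∑ x, ∑ y, q z x y) ≤ 1 := by
    calc (∑ z, ∑ x, ∑ y, q z x y)
        = ∑ z, ∑ y, ∑ x, q z x y :=
          Finset.sum_congr rfl fun z _ => Finset.sum_comm
      _ = ∑ y, ∑ z, ∑ x, q z x y := Finset.sum_comm
      _ ≤ ∑ y, margSnd pZY y := Finset.sum_le_sum fun y _ => hper y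
      _ = 1 := hpY1
  -- assemble
  have hbig : (∑ z, ∑ x, ∑ y, (p (z, x, y) - q z x y)) ≤
      ∑ z, ∑ x, ∑ y,
        (p (z, x, y) * Real.log (pZX (z, x) / (margFst pZX z * margSnd pZX x)) -
         p (z, x, y) * Real.log (pZY (z, y) / (margFst pZY z * margSnd pZY y))) :=
    Finset.sum_le_sum fun z _ => Finset.sum_le_sum fun x _ =>
      Finset.sum_le_sum fun y _ => hterm z x y
  simp only [Finset.sum_sub_distrib] at hbig
  rw [hsum'] at hbig
  rw [hMIZX, hMIZY]
  linarith [hqsum, hbig]
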